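/- Let (U,Θ,ρ) be a probability space, N ∈ ℕ, Σ a symmetric positive definite N×N real matrix, and let G : U → ℝ^N be a measurable map for which there is a measurable function W : U → [0,∞) with ∫_U (1 + W(z))² dρ(z) < ∞ and |G(z)| ≤ W(z) for ρ-almost every z. For δ ∈ ℝ^N define Φ(z,δ) = (1/2)⟨Σ^{-1}(δ − G(z)), δ − G(z)⟩, Z(δ) = ∫_U exp(−Φ(z,δ)) dρ(z), and let μ^δ be the probability measure with density dμ^δ/dρ = exp(−Φ(·,δ))/Z(δ). Then Z(δ) > 0 for every δ, and for every r > 0 there is a constant c(r), depending only on r, Σ and ∫(1+W)² dρ, such that for all δ, δ' ∈ ℝ^N with |δ| ≤ r and |δ'| ≤ r, d_Hell(μ^δ, μ^{δ'}) ≤ c(r) |δ − δ'|. -/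

import Mathlib

/-!
The square root of the Gibbs density is `exp (-Φ/2) / √Z`. Splitting off the change of
normalisation and bounding it by the reverse triangle inequality in `L²(ρ)` gives
`d_Hell² ≤ (2 / Z) ‖exp (-Φ/2) - exp (-Φ'/2)‖²`. As `exp (-·)` is 1-Lipschitz on `[0, ∞)` and the
potential is a quadratic form, on the ball of radius `r` we have
`|Φ_δ - Φ_δ'| ≤ ‖Σ⁻¹‖ (1 + r)(1 + W) |δ - δ'|`, a square-integrable bound; the same envelope gives
`Φ_δ ≤ ‖Σ⁻¹‖/2 ((1 + r)(1 + W))²`, hence a lower bound on `Z(δ)` that is uniform on the ball.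
-/

open MeasureTheory Real Filter Matrix

/-- Euclidean norm on `ℝ^N`. -/
noncomputable def euclNorm {N : ℕ} (v : Fin N → ℝ) : ℝ := Real.sqrt (v ⬝ᵥ v)

/-- Least-squares potential `Φ(z) = ½ ⟨Σ⁻¹(δ - G z), δ - G z⟩`. -/
noncomputable def potential {U : Type*} {N : ℕ} (S : Matrix (Fin N) (Fin N) ℝ)
    (δ : Fin N → ℝ) (G : U → Fin N → ℝ) (z : U) : ℝ :=
  1 / 2 * ((S⁻¹).mulVec (δ - G z) ⬝ᵥ (δ - G z))

/-- Hellinger distance between two measures, absolutely continuous with respect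
to `ρ`, given by their densities `f, g`. -/
noncomputable def hellingerDist {U : Type*} [MeasurableSpace U] (ρ : Measure U)
    (f g : U → ℝ) : ℝ :=
  Real.sqrt (1 / 2 * ∫ z, (Real.sqrt (f z) - Real.sqrt (g z)) ^ 2 ∂ρ)

/-- Gibbs density `exp(-Φ)/Z` with `Z = ∫ exp(-Φ) dρ`. -/
noncomputable def gibbsDensity {U : Type*} [MeasurableSpace U] (ρ : Measure U)
    (Φ : U → ℝ) (z : U) : ℝ :=
  Real.exp (-Φ z) / ∫ w, Real.exp (-Φ w) ∂ρ

lemma euclNorm_eq_norm {N : ℕ} (v : Fin N → ℝ) : euclNorm v = ‖WithLp.toLp 2 v‖ := by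
  rw [EuclideanSpace.norm_eq, euclNorm, dotProduct]
  simp [sq]

lemma euclNorm_nonneg {N : ℕ} (v : Fin N → ℝ) : 0 ≤ euclNorm v := Real.sqrt_nonneg _

lemma euclNorm_sub_le {N : ℕ} (v w : Fin N → ℝ) : euclNorm (v - w) ≤ euclNorm v + euclNorm w := by
  simpa only [euclNorm_eq_norm, WithLp.toLp_sub] using norm_sub_le _ _

lemma abs_mulVec_dotProduct_le {N : ℕ} (A : Matrix (Fin N) (Fin N) ℝ) (v w : Fin N → ℝ) :
    |A *ᵥ v ⬝ᵥ w| ≤ ‖toEuclideanCLM (𝕜 := ℝ) A‖ * euclNorm v * euclNorm w := by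
  rw [dotProduct_comm, ← inner_toEuclideanCLM, euclNorm_eq_norm, euclNorm_eq_norm]
  exact (abs_real_inner_le_norm _ _).trans <| by
    grw [ContinuousLinearMap.le_opNorm]; rw [mul_comm]

lemma abs_exp_neg_sub_exp_neg_le {a b : ℝ} (ha : 0 ≤ a) (hb : 0 ≤ b) :
    |exp (-a) - exp (-b)| ≤ |a - b| := by
  wlog hba : b ≤ a generalizing a b
  · rw [abs_sub_comm, abs_sub_comm a]; exact this hb ha (le_of_not_ge hba)
  have hfactor : exp (-b) - exp (-a) = exp (-b) * (1 - exp (-(a - b))) := by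
    rw [mul_sub, ← exp_add]; ring_nf
  have hexp_le : exp (-b) ≤ 1 := exp_le_one_iff.2 (by linarith)
  have hone_sub_le : 1 - exp (-(a - b)) ≤ a - b := by linarith [add_one_le_exp (-(a - b))]
  have hone_sub_nonneg : 0 ≤ 1 - exp (-(a - b)) := by
    linarith [exp_le_one_iff.2 (by linarith : -(a - b) ≤ 0)]
  rw [abs_sub_comm, abs_of_nonneg (by rw [hfactor]; positivity), abs_of_nonneg (by linarith),
    hfactor]
  nlinarith [exp_pos (-b)]

section Hellinger

variable {U : Type*} [MeasurableSpace U] {ρ : Measure U}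

lemma integral_mul_le_sqrt_mul_sqrt {f g : U → ℝ} (hf : MemLp f 2 ρ) (hg : MemLp g 2 ρ) :
    ∫ z, f z * g z ∂ρ ≤ √(∫ z, f z ^ 2 ∂ρ) * √(∫ z, g z ^ 2 ∂ρ) := by
  have h2 : ENNReal.ofReal 2 = 2 := by norm_num
  have hnorm_rpow : ∀ h : U → ℝ, ∫ z, ‖h z‖ ^ (2 : ℝ) ∂ρ = ∫ z, h z ^ 2 ∂ρ := fun h => by
    simp only [Real.rpow_two, Real.norm_eq_abs, sq_abs]
  calc ∫ z, f z * g z ∂ρ ≤ ∫ z, ‖f z‖ * ‖g z‖ ∂ρ := by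
        simpa only [norm_mul] using
          (le_abs_self _).trans (norm_integral_le_integral_norm fun z => f z * g z)
    _ ≤ _ := integral_mul_norm_le_Lp_mul_Lq Real.HolderConjugate.two_two (h2 ▸ hf) (h2 ▸ hg)
    _ = _ := by rw [hnorm_rpow, hnorm_rpow, Real.sqrt_eq_rpow, Real.sqrt_eq_rpow]

lemma sq_sqrt_integral_sq_sub_le {f g : U → ℝ} (hf : MemLp f 2 ρ) (hg : MemLp g 2 ρ) :
    (√(∫ z, f z ^ 2 ∂ρ) - √(∫ z, g z ^ 2 ∂ρ)) ^ 2 ≤ ∫ z, (f z - g z) ^ 2 ∂ρ := by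
  have hfg : Integrable (fun z => f z * g z) ρ := hf.integrable_mul hg
  have hcross : Integrable (fun z => f z ^ 2 - 2 * (f z * g z)) ρ :=
    hf.integrable_sq.sub (hfg.const_mul 2)
  have hexpand : ∫ z, (f z - g z) ^ 2 ∂ρ =
      ∫ z, f z ^ 2 ∂ρ - 2 * ∫ z, f z * g z ∂ρ + ∫ z, g z ^ 2 ∂ρ := by
    calc ∫ z, (f z - g z) ^ 2 ∂ρ = ∫ z, f z ^ 2 - 2 * (f z * g z) + g z ^ 2 ∂ρ := by
          congr 1 with z; ring
      _ = _ := by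
          rw [integral_add hcross hg.integrable_sq,
            integral_sub hf.integrable_sq (hfg.const_mul 2), integral_const_mul]
  rw [hexpand, sub_sq, Real.sq_sqrt (integral_nonneg fun z => sq_nonneg (f z)),
    Real.sq_sqrt (integral_nonneg fun z => sq_nonneg (g z))]
  linarith [integral_mul_le_sqrt_mul_sqrt hf hg]

lemma exp_neg_half_sq (x : ℝ) : exp (-x / 2) ^ 2 = exp (-x) := by
  rw [sq, ← exp_add, add_halves]

lemma sqrt_gibbsDensity (Φ : U → ℝ) (z : U) :
    √(gibbsDensity ρ Φ z) = exp (-Φ z / 2) / √(∫ w, exp (-Φ w) ∂ρ) := by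
  rw [gibbsDensity, Real.sqrt_div (exp_nonneg _), ← Real.exp_half]

lemma memLp_exp_neg_half {Φ : U → ℝ} (hΦ : Integrable (fun z => exp (-Φ z)) ρ) :
    MemLp (fun z => exp (-Φ z / 2)) 2 ρ := by
  have hsqrt : (fun z => exp (-Φ z / 2)) = fun z => √(exp (-Φ z)) := funext fun z => exp_half _
  refine (memLp_two_iff_integrable_sq ?_).2 (by simpa only [exp_neg_half_sq] using hΦ)
  rw [hsqrt]
  exact hΦ.aemeasurable.sqrt.aestronglyMeasurable

lemma integrable_exp_neg_of_nonneg [IsFiniteMeasure ρ] {f : U → ℝ} (hf : Measurable f)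
    (hf0 : ∀ z, 0 ≤ f z) : Integrable (fun z => exp (-f z)) ρ :=
  (integrable_const 1).mono' hf.neg.exp.aestronglyMeasurable <| ae_of_all _ fun z => by
    rw [Real.norm_of_nonneg (exp_nonneg _), exp_le_one_iff, neg_nonpos]
    exact hf0 z

lemma integral_sq_div_sub_div_le {f g : U → ℝ} (hf : MemLp f 2 ρ) (hg : MemLp g 2 ρ) (a b : ℝ) :
    ∫ z, (f z / a - g z / b) ^ 2 ∂ρ ≤
      2 * ((∫ z, (f z - g z) ^ 2 ∂ρ) / a ^ 2 + (1 / a - 1 / b) ^ 2 * ∫ z, g z ^ 2 ∂ρ) := by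
  have hfg : Integrable (fun z => (f z - g z) ^ 2) ρ := (hf.sub hg).integrable_sq
  have hpointwise : ∀ z, (f z / a - g z / b) ^ 2 ≤
      2 * ((f z - g z) ^ 2 / a ^ 2 + (1 / a - 1 / b) ^ 2 * g z ^ 2) := fun z => by
    rw [show f z / a - g z / b = (f z - g z) / a + (1 / a - 1 / b) * g z by ring, ← div_pow,
      ← mul_pow]
    exact add_sq_le
  calc ∫ z, (f z / a - g z / b) ^ 2 ∂ρ
      ≤ ∫ z, 2 * ((f z - g z) ^ 2 / a ^ 2 + (1 / a - 1 / b) ^ 2 * g z ^ 2) ∂ρ := by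
        refine integral_mono ?_ (((hfg.div_const _).add (hg.integrable_sq.const_mul _)).const_mul 2)
          hpointwise
        simpa only [div_eq_mul_inv, Pi.sub_apply] using
          ((hf.mul_const a⁻¹).sub (hg.mul_const b⁻¹)).integrable_sq
    _ = _ := by
        rw [integral_const_mul, integral_add (hfg.div_const _) (hg.integrable_sq.const_mul _),
          integral_div, integral_const_mul]

lemma hellingerDist_gibbsDensity_sq_le [NeZero ρ] {Φ Φ' : U → ℝ}
    (hΦ : Integrable (fun z => exp (-Φ z)) ρ) (hΦ' : Integrable (fun z => exp (-Φ' z)) ρ) :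
    hellingerDist ρ (gibbsDensity ρ Φ) (gibbsDensity ρ Φ') ^ 2 ≤
      2 / (∫ z, exp (-Φ z) ∂ρ) * ∫ z, (exp (-Φ z / 2) - exp (-Φ' z / 2)) ^ 2 ∂ρ := by
  set g : U → ℝ := fun z => exp (-Φ z / 2)
  set g' : U → ℝ := fun z => exp (-Φ' z / 2)
  set Z := ∫ z, exp (-Φ z) ∂ρ
  set Z' := ∫ z, exp (-Φ' z) ∂ρ
  have hZ : 0 < Z := integral_exp_pos hΦ
  have hZ' : 0 < Z' := integral_exp_pos hΦ'
  have hg : MemLp g 2 ρ := memLp_exp_neg_half hΦ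
  have hg' : MemLp g' 2 ρ := memLp_exp_neg_half hΦ'
  have hZ_eq : ∫ z, g z ^ 2 ∂ρ = Z := by simp only [g, exp_neg_half_sq, Z]
  have hZ'_eq : ∫ z, g' z ^ 2 ∂ρ = Z' := by simp only [g', exp_neg_half_sq, Z']
  -- the normalisations differ by `|√Z - √Z'| = |‖g‖₂ - ‖g'‖₂| ≤ ‖g - g'‖₂`
  have hnormalisation : (1 / √Z - 1 / √Z') ^ 2 * Z' = (√Z - √Z') ^ 2 / Z := by
    rw [← Real.sq_sqrt hZ.le, ← Real.sq_sqrt hZ'.le, Real.sqrt_sq (Real.sqrt_nonneg _),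
      Real.sqrt_sq (Real.sqrt_nonneg _)]
    field_simp
    ring
  have hsplit := integral_sq_div_sub_div_le hg hg' (√Z) (√Z')
  have hcs := sq_sqrt_integral_sq_sub_le hg hg'
  rw [hZ'_eq, hnormalisation, Real.sq_sqrt hZ.le] at hsplit
  rw [hZ_eq, hZ'_eq] at hcs
  rw [hellingerDist, Real.sq_sqrt (by positivity)]
  simp only [sqrt_gibbsDensity]
  calc 1 / 2 * ∫ z, (g z / √Z - g' z / √Z') ^ 2 ∂ρ
      ≤ (∫ z, (g z - g' z) ^ 2 ∂ρ) / Z + (√Z - √Z') ^ 2 / Z := by linarith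
    _ ≤ _ := by rw [← add_div, div_mul_eq_mul_div]; gcongr; linarith

lemma hellingerDist_gibbsDensity_le [NeZero ρ] {Φ Φ' B : U → ℝ} {z₀ ε : ℝ}
    (hΦ : Integrable (fun z => exp (-Φ z)) ρ) (hΦ' : Integrable (fun z => exp (-Φ' z)) ρ)
    (hΦ0 : ∀ z, 0 ≤ Φ z) (hΦ'0 : ∀ z, 0 ≤ Φ' z) (hB : Integrable (fun z => B z ^ 2) ρ)
    (hz₀ : 0 < z₀) (hZ : z₀ ≤ ∫ z, exp (-Φ z) ∂ρ) (hε : 0 ≤ ε)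
    (hΦΦ' : ∀ᵐ z ∂ρ, |Φ z - Φ' z| ≤ ε * B z) :
    hellingerDist ρ (gibbsDensity ρ Φ) (gibbsDensity ρ Φ') ≤
      ε * √((∫ z, B z ^ 2 ∂ρ) / (2 * z₀)) := by
  have hpointwise : ∀ᵐ z ∂ρ, (exp (-Φ z / 2) - exp (-Φ' z / 2)) ^ 2 ≤ ε ^ 2 / 4 * B z ^ 2 := by
    filter_upwards [hΦΦ'] with z hz
    have hlip := abs_exp_neg_sub_exp_neg_le (a := Φ z / 2) (b := Φ' z / 2)
      (by linarith [hΦ0 z]) (by linarith [hΦ'0 z])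
    rw [← sub_div, abs_div, abs_two, ← neg_div, ← neg_div] at hlip
    calc (exp (-Φ z / 2) - exp (-Φ' z / 2)) ^ 2 ≤ (ε * B z / 2) ^ 2 := by
          rw [← sq_abs]; gcongr; linarith
      _ = ε ^ 2 / 4 * B z ^ 2 := by ring
  have hdiff : ∫ z, (exp (-Φ z / 2) - exp (-Φ' z / 2)) ^ 2 ∂ρ ≤ ε ^ 2 / 4 * ∫ z, B z ^ 2 ∂ρ := by
    rw [← integral_const_mul]
    exact integral_mono_ae ((memLp_exp_neg_half hΦ).sub (memLp_exp_neg_half hΦ')).integrable_sq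
      (hB.const_mul _) hpointwise
  rw [← Real.sqrt_sq hε, ← Real.sqrt_mul (sq_nonneg _)]
  refine Real.le_sqrt_of_sq_le ((hellingerDist_gibbsDensity_sq_le hΦ hΦ').trans ?_)
  calc 2 / (∫ z, exp (-Φ z) ∂ρ) * ∫ z, (exp (-Φ z / 2) - exp (-Φ' z / 2)) ^ 2 ∂ρ
      ≤ 2 / z₀ * (ε ^ 2 / 4 * ∫ z, B z ^ 2 ∂ρ) := by
        gcongr
    _ = ε ^ 2 * ((∫ z, B z ^ 2 ∂ρ) / (2 * z₀)) := by field_simp; ring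

end Hellinger

section Potential

variable {U : Type*} {N : ℕ} {S : Matrix (Fin N) (Fin N) ℝ}

lemma potential_nonneg (hS : S.PosDef) (δ : Fin N → ℝ) (G : U → Fin N → ℝ) (z : U) :
    0 ≤ potential S δ G z := by
  have h := hS.inv.posSemidef.dotProduct_mulVec_nonneg (δ - G z)
  rw [star_trivial, dotProduct_comm] at h
  unfold potential
  positivity

lemma potential_le (δ : Fin N → ℝ) (G : U → Fin N → ℝ) (z : U) :
    potential S δ G z ≤ ‖toEuclideanCLM (𝕜 := ℝ) S⁻¹‖ / 2 * euclNorm (δ - G z) ^ 2 := by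
  have h := abs_mulVec_dotProduct_le S⁻¹ (δ - G z) (δ - G z)
  unfold potential
  nlinarith [le_abs_self (S⁻¹ *ᵥ (δ - G z) ⬝ᵥ (δ - G z))]

lemma abs_potential_sub_potential_le (δ δ' : Fin N → ℝ) (G : U → Fin N → ℝ) (z : U) :
    |potential S δ G z - potential S δ' G z| ≤ ‖toEuclideanCLM (𝕜 := ℝ) S⁻¹‖ / 2 *
      (euclNorm (δ - G z) + euclNorm (δ' - G z)) * euclNorm (δ - δ') := by
  have hpolar : potential S δ G z - potential S δ' G z = 1 / 2 *
      (S⁻¹ *ᵥ (δ - δ') ⬝ᵥ (δ - G z) + S⁻¹ *ᵥ (δ' - G z) ⬝ᵥ (δ - δ')) := by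
    rw [← sub_sub_sub_cancel_right δ δ' (G z)]
    simp only [potential, mulVec_sub, sub_dotProduct, dotProduct_sub]
    ring
  have h₁ := abs_mulVec_dotProduct_le S⁻¹ (δ - δ') (δ - G z)
  have h₂ := abs_mulVec_dotProduct_le S⁻¹ (δ' - G z) (δ - δ')
  rw [hpolar, abs_mul, abs_of_pos one_half_pos]
  nlinarith [abs_add_le (S⁻¹ *ᵥ (δ - δ') ⬝ᵥ (δ - G z)) (S⁻¹ *ᵥ (δ' - G z) ⬝ᵥ (δ - δ'))]

lemma measurable_potential [MeasurableSpace U] (δ : Fin N → ℝ) {G : U → Fin N → ℝ}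
    (hG : Measurable G) : Measurable (potential S δ G) := by
  unfold potential
  fun_prop

lemma integrable_exp_neg_potential [MeasurableSpace U] {ρ : Measure U} [IsFiniteMeasure ρ]
    (hS : S.PosDef) (δ : Fin N → ℝ) {G : U → Fin N → ℝ} (hG : Measurable G) :
    Integrable (fun z => exp (-potential S δ G z)) ρ :=
  integrable_exp_neg_of_nonneg (measurable_potential δ hG) (potential_nonneg hS δ G)

end Potential

theorem posterior_locally_lipschitz_envelope_general
    {U : Type*} [MeasurableSpace U] (ρ : Measure U) [IsProbabilityMeasure ρ]
    {N : ℕ} (S : Matrix (Fin N) (Fin N) ℝ) (hS : S.PosDef)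
    (G : U → Fin N → ℝ) (hGmeas : Measurable G)
    (W : U → ℝ) (hWmeas : Measurable W)
    (hWint : Integrable (fun z => (1 + W z) ^ 2) ρ)
    (hbound : ∀ᵐ z ∂ρ, euclNorm (G z) ≤ W z) :
    (∀ δ : Fin N → ℝ, 0 < ∫ w, Real.exp (-(potential S δ G w)) ∂ρ) ∧
    ∀ r > 0, ∃ c : ℝ, ∀ δ δ' : Fin N → ℝ, euclNorm δ ≤ r → euclNorm δ' ≤ r →
      hellingerDist ρ (gibbsDensity ρ (potential S δ G))
          (gibbsDensity ρ (potential S δ' G))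
        ≤ c * euclNorm (δ - δ') := by
  have hexp_int δ := integrable_exp_neg_potential (ρ := ρ) hS δ hGmeas
  refine ⟨fun δ => integral_exp_pos (hexp_int δ), fun r _ => ?_⟩
  set K := ‖toEuclideanCLM (𝕜 := ℝ) S⁻¹‖
  set B : U → ℝ := fun z => (1 + r) * (1 + W z)
  have hB : Integrable (fun z => B z ^ 2) ρ := by
    simpa only [B, mul_pow] using hWint.const_mul ((1 + r) ^ 2)
  have henvelope : ∀ δ, euclNorm δ ≤ r → ∀ᵐ z ∂ρ, euclNorm (δ - G z) ≤ B z := fun δ hδ => by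
    filter_upwards [hbound] with z hz
    nlinarith [euclNorm_sub_le δ (G z), euclNorm_nonneg δ, euclNorm_nonneg (G z)]
  set z₀ := ∫ z, exp (-(K / 2 * B z ^ 2)) ∂ρ
  have hz₀_int : Integrable (fun z => exp (-(K / 2 * B z ^ 2))) ρ :=
    integrable_exp_neg_of_nonneg (by fun_prop) fun z => by positivity
  refine ⟨K * √((∫ z, B z ^ 2 ∂ρ) / (2 * z₀)), fun δ δ' hδ hδ' => ?_⟩
  have hd : 0 ≤ euclNorm (δ - δ') := euclNorm_nonneg _
  have hZ_ge : z₀ ≤ ∫ z, exp (-potential S δ G z) ∂ρ := by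
    refine integral_mono_ae hz₀_int (hexp_int δ) ?_
    filter_upwards [henvelope δ hδ] with z hz
    gcongr
    exact (potential_le δ G z).trans (by gcongr; exact euclNorm_nonneg _)
  have hlip : ∀ᵐ z ∂ρ, |potential S δ G z - potential S δ' G z| ≤ K * euclNorm (δ - δ') * B z := by
    filter_upwards [henvelope δ hδ, henvelope δ' hδ'] with z hz hz'
    calc _ ≤ K / 2 * (B z + B z) * euclNorm (δ - δ') := by
          grw [abs_potential_sub_potential_le, hz, hz']
      _ = K * euclNorm (δ - δ') * B z := by ring
  calc _ ≤ K * euclNorm (δ - δ') * √((∫ z, B z ^ 2 ∂ρ) / (2 * z₀)) :=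
        hellingerDist_gibbsDensity_le (hexp_int δ) (hexp_int δ') (potential_nonneg hS δ G)
          (potential_nonneg hS δ' G) hB (integral_exp_pos hz₀_int) hZ_ge
          (by positivity) hlip
    _ = _ := by ring

/-- Well-posedness (positivity of the normalizing constant and local Lipschitz
continuity in the data `δ`, in the Hellinger distance) of the Bayesian
posterior for a forward map dominated by a square-integrable envelope
(Gaussian-prior setting). -/
theorem posterior_locally_lipschitz_envelope
    {U : Type*} [MeasurableSpace U] (ρ : Measure U) [IsProbabilityMeasure ρ]
    {N : ℕ} (S : Matrix (Fin N) (Fin N) ℝ) (hS : S.PosDef)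
    (G : U → Fin N → ℝ) (hGmeas : Measurable G)
    (W : U → ℝ) (hWmeas : Measurable W) (hWnn : ∀ z, 0 ≤ W z)
    (hWint : Integrable (fun z => (1 + W z) ^ 2) ρ)
    (hbound : ∀ᵐ z ∂ρ, euclNorm (G z) ≤ W z) :
    (∀ δ : Fin N → ℝ, 0 < ∫ w, Real.exp (-(potential S δ G w)) ∂ρ) ∧
    ∀ r > 0, ∃ c : ℝ, ∀ δ δ' : Fin N → ℝ, euclNorm δ ≤ r → euclNorm δ' ≤ r →
      hellingerDist ρ (gibbsDensity ρ (potential S δ G))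
          (gibbsDensity ρ (potential S δ' G))
        ≤ c * euclNorm (δ - δ') :=
  posterior_locally_lipschitz_envelope_general ρ S hS G hGmeas W hWmeas hWint hbound
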